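/- The principle W_κ(κ) is equivalent to 2^{<κ} = κ: there exist a κ-tree T, a set B of κ many cofinal branches of T, and a sequence ⟨W_α : α < κ⟩ with each W_α ⊆ 𝒫(T_α) of size < κ, such that for every z ⊆ B of size < κ there is α < κ with π_β[z] ∈ W_β for all β ≥ α, if and only if 2^{<κ} = κ. -/

import Mathlib

open Cardinal Set
open scoped Classical

universe u v

namespace ForestPaper

variable {X : Type u} {μ : Type v}

/-- The domain of a partial function represented as an `Option`-valued function. -/
def pdom (f : X → Option μ) : Set X := {x | f x ≠ none}

/-- The range of a partial function. -/
def pran (f : X → Option μ) : Set μ := {y | ∃ x, f x = some y}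

/-- `Ext g f` means the partial function `g` extends `f`. -/
def Ext (g f : X → Option μ) : Prop := ∀ x, f x ≠ none → g x = f x

/-- Restriction of a partial function to a set. -/
noncomputable def pres (f : X → Option μ) (z : Set X) : X → Option μ :=
  fun x => if x ∈ z then f x else none

/-- The set of points of the common domain where `f` and `g` disagree. -/
def pdiff (f g : X → Option μ) : Set X :=
  {x | f x ≠ none ∧ g x ≠ none ∧ f x ≠ g x}

/-- `f` and `g` agree on their common domain. -/
def Agree (f g : X → Option μ) : Prop :=
  ∀ x, f x ≠ none → g x ≠ none → f x = g x

/-- Two members of `F` are compatible if they have a common extension in `F`. -/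
def Compat (F : Set (X → Option μ)) (f g : X → Option μ) : Prop :=
  ∃ h ∈ F, Ext h f ∧ Ext h g

/-- `A` is an antichain in `F`: a pairwise incompatible subset of `F`. -/
def IsAntichainIn (F A : Set (X → Option μ)) : Prop :=
  A ⊆ F ∧ ∀ f ∈ A, ∀ g ∈ A, f ≠ g → ¬ Compat F f g

/-- `A` is a maximal antichain in `F`. -/
def IsMaxAntichainIn (F A : Set (X → Option μ)) : Prop :=
  IsAntichainIn F A ∧ ∀ f ∈ F, ∃ g ∈ A, Compat F f g

/-- A `(c, X, μ)`-forest: a collection of partial functions from `X` to `μ` whose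
domains are exactly the subsets of `X` of size `< c`, with coherent restrictions
between levels (every restriction of a member is a member, and every member
extends to any larger admissible domain). -/
structure IsForest (c : Cardinal.{u}) (F : Set (X → Option μ)) : Prop where
  dom_small : ∀ f ∈ F, #(pdom f) < c
  exists_dom : ∀ z : Set X, #z < c → ∃ f ∈ F, pdom f = z
  restrict_mem : ∀ f ∈ F, ∀ z : Set X, z ⊆ pdom f → pres f z ∈ F
  extend_mem : ∀ f ∈ F, ∀ z : Set X, #z < c → pdom f ⊆ z →
    ∃ g ∈ F, pdom g = z ∧ Ext g f

/-- A family is `κ`-coherent when any two members disagree at `< κ` many points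
of their common domain. -/
def Coherent (κ : Cardinal.{u}) (F : Set (X → Option μ)) : Prop :=
  ∀ f ∈ F, ∀ g ∈ F, #(pdiff f g) < κ

/-- `F` is closed under modifications at `< κ` many points. -/
def ClosedMod (κ : Cardinal.{u}) (F : Set (X → Option μ)) : Prop :=
  ∀ f ∈ F, ∀ f' : X → Option μ, pdom f' = pdom f →
    #{x | f x ≠ f' x} < κ → f' ∈ F

/-- A partial function is injective (on its domain). -/
def PInj (f : X → Option μ) : Prop :=
  ∀ x y, f x ≠ none → f x = f y → x = y

/-- A partial function is `< κ`-to-1: every fiber has size `< κ`. -/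
def SmallTo1 (κ : Cardinal.{u}) (f : X → Option μ) : Prop :=
  ∀ y : μ, #{x | f x = some y} < κ

/-- `F` contains a `⊆`-well-ordered chain of order type `o`. -/
def HasChain (o : Ordinal.{u}) (F : Set (X → Option μ)) : Prop :=
  ∃ c : o.ToType → (X → Option μ), (∀ i, c i ∈ F) ∧
    ∀ i j, i < j → Ext (c j) (c i) ∧ c i ≠ c j

/-- A `κ`-tree presented as an inverse system of levels indexed by the ordinals
below `κ`, with projection maps, all levels of size `< κ`. -/
structure TreeSystem (κ : Cardinal.{u}) where
  Lev : κ.ord.ToType → Type u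
  proj : ∀ {α β : κ.ord.ToType}, β ≤ α → Lev α → Lev β
  proj_refl : ∀ (α : κ.ord.ToType) (x : Lev α), proj le_rfl x = x
  proj_comp : ∀ {α β γ : κ.ord.ToType} (h1 : γ ≤ β) (h2 : β ≤ α) (x : Lev α),
    proj h1 (proj h2 x) = proj (h1.trans h2) x
  small : ∀ α, #(Lev α) < κ

/-- A cofinal branch of a tree system: a coherent choice of a node at each level. -/
def Branch {κ : Cardinal.{u}} (T : TreeSystem κ) : Type u :=
  {b : ∀ α, T.Lev α // ∀ (α β : κ.ord.ToType) (h : β ≤ α), T.proj h (b α) = b β}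

/-- The principle `W_κ(λ)`: there are a `κ`-tree `T`, a set `B` of `λ` many
cofinal branches, and small families `W_α ⊆ 𝒫(T_α)` such that every subset of
`B` of size `< κ` has its level-`β` projections in `W_β` for all sufficiently
large `β`. -/
def WPrinciple (κ lam : Cardinal.{u}) : Prop :=
  ∃ (T : TreeSystem κ) (B : Set (Branch T))
    (W : ∀ α : κ.ord.ToType, Set (Set (T.Lev α))),
    #B = lam ∧ (∀ α, #(W α) < κ) ∧
    ∀ z : Set (Branch T), z ⊆ B → #z < κ →
      ∃ α, ∀ β, α ≤ β → {n : T.Lev β | ∃ b ∈ z, b.1 β = n} ∈ W β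

/-!
If `2^{<κ} ≤ κ`, take the tree whose level `α` is `[0, α]`, with one branch `β ↦ min γ β` for
each `γ < κ`. By regularity a set of `< κ` branches comes from a bounded subset of `κ`, and above
its bound the projections of the set are just that subset. There are at most `κ` bounded subsets,
so listing them injectively as `S_ξ`, `ξ < κ`, and letting `W_β` hold the traces of the `S_ξ`
with `ξ < β` captures every small set.

Conversely, let `c < κ` and pick `c` branches in `B`. By regularity they are pairwise separated
below some level `α`, so at every level `β ≥ α` the projection of a set of them determines the
set. Sending each set to a capturing level `β ≥ α` and its projection there embeds `2^c` into
`Σ_{β<κ} W_β`, which has size `≤ κ`. Finally `κ ≤ 2^{<κ}` always holds, by Cantor.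
-/

theorem _root_.Cardinal.IsRegular.exists_forall_lt_of_mk_lt {κ : Cardinal.{u}} (hκ : κ.IsRegular)
    {s : Set κ.ord.ToType} (hs : #s < κ) : ∃ a, ∀ x ∈ s, x < a :=
  not_isCofinal_iff.1 fun h => (Order.cof_le h).not_gt (by rwa [Ordinal.cof_toType, hκ.cof_ord])

theorem _root_.Cardinal.sum_toType_ord_le {κ : Cardinal.{u}} (hκ : ℵ₀ ≤ κ)
    {f : κ.ord.ToType → Cardinal.{u}} (hf : ∀ α, f α ≤ κ) : sum f ≤ κ :=
  (sum_le_sum _ _ hf).trans (by rw [sum_const', mk_ord_toType, mul_eq_self hκ])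

theorem _root_.Cardinal.le_two_powerlt_self (c : Cardinal.{u}) : c ≤ 2 ^< c := by
  by_contra! h
  exact (cantor _).not_ge (le_powerlt 2 h)

theorem mk_Iio_toType_lt {κ : Cardinal.{u}} (α : κ.ord.ToType) : #(Iio α) < κ := by
  simpa using mk_Iio_lt α

theorem mk_Iic_toType_lt {κ : Cardinal.{u}} (hκ : ℵ₀ ≤ κ) (α : κ.ord.ToType) : #(Iic α) < κ := by
  rw [← Iio_insert]
  exact mk_insert_le.trans_lt (add_lt_of_lt hκ (mk_Iio_toType_lt α) (one_lt_aleph0.trans_le hκ))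

theorem mk_bounded_sets_le {κ : Cardinal.{u}} (hκ : ℵ₀ ≤ κ) (h2 : 2 ^< κ ≤ κ) :
    #(⋃ α : κ.ord.ToType, 𝒫 Iio α) ≤ κ := by
  refine mk_iUnion_le_sum_mk.trans (sum_toType_ord_le hκ fun α => ?_)
  rw [mk_powerset]
  exact (le_powerlt 2 (mk_Iio_toType_lt α)).trans h2

namespace Branch

variable {κ : Cardinal.{u}} {T : TreeSystem κ}

theorem exists_ne_of_ne {b b' : Branch T} (h : b ≠ b') : ∃ α, b.1 α ≠ b'.1 α := by
  by_contra! h'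
  exact h (Subtype.ext (funext h'))

theorem ne_of_le {b b' : Branch T} {α β : κ.ord.ToType} (h : α ≤ β) (hne : b.1 α ≠ b'.1 α) :
    b.1 β ≠ b'.1 β := by
  rw [← b.2 β α h, ← b'.2 β α h] at hne
  exact fun heq => hne (congrArg _ heq)

theorem exists_injOn_of_mk_lt (hκ : κ.IsRegular) {A : Set (Branch T)} (hA : #A < κ) :
    ∃ α, ∀ β, α ≤ β → InjOn (fun b : Branch T => b.1 β) A := by
  choose sep hsep using fun p : {p : A × A // p.1 ≠ p.2} =>
    exists_ne_of_ne fun h => p.2 (Subtype.ext h)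
  have hsmall : #(range sep) < κ := by
    refine mk_range_le.trans_lt ((mk_subtype_le _).trans_lt ?_)
    rw [mk_prod, lift_id]
    exact mul_lt_of_lt hκ.aleph0_le hA hA
  obtain ⟨a, ha⟩ := hκ.exists_forall_lt_of_mk_lt hsmall
  refine ⟨a, fun β hβ b hb b' hb' heq => by_contra fun hne => ?_⟩
  let p : {p : A × A // p.1 ≠ p.2} := ⟨(⟨b, hb⟩, ⟨b', hb'⟩), fun h => hne (congrArg Subtype.val h)⟩
  exact ne_of_le ((ha _ ⟨p, rfl⟩).le.trans hβ) (hsep p) heq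

end Branch

theorem two_power_le_of_wprinciple {κ lam c : Cardinal.{u}} (hκ : κ.IsRegular)
    (hW : WPrinciple κ lam) (hcκ : c < κ) (hc : c ≤ lam) : 2 ^ c ≤ κ := by
  obtain ⟨T, B, W, hB, hWκ, hcap⟩ := hW
  obtain ⟨A, hAB, rfl⟩ := le_mk_iff_exists_subset.1 (hc.trans_eq hB.symm)
  obtain ⟨α, hα⟩ := Branch.exists_injOn_of_mk_lt hκ hcκ
  have : ∀ z : 𝒫 A, ∃ β, α ≤ β ∧ (fun b : Branch T => b.1 β) '' z ∈ W β := by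
    intro z
    obtain ⟨β, hβ⟩ := hcap z (z.2.trans hAB) ((mk_le_mk_of_subset z.2).trans_lt hcκ)
    exact ⟨max α β, le_max_left _ _, hβ _ (le_max_right _ _)⟩
  choose level hlevel hmem using this
  let Φ : 𝒫 A → Σ β, W β := fun z => ⟨level z, _, hmem z⟩
  have hΦ : Function.Injective Φ := by
    have key : ∀ z : 𝒫 A, (fun b : Branch T => b.1 (Φ z).1) ⁻¹' (Φ z).2 ∩ A = z :=
      fun z => (hα _ (hlevel z)).preimage_image_inter z.2
    intro z z' h
    exact Subtype.ext ((key z).symm.trans (h ▸ key z'))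
  calc 2 ^ #A = #(𝒫 A) := (mk_powerset A).symm
    _ ≤ #(Σ β, W β) := mk_le_of_injective hΦ
    _ ≤ κ := by
      rw [mk_sigma]
      exact sum_toType_ord_le hκ.aleph0_le fun β => (hWκ β).le

theorem two_powerlt_le_of_wprinciple {κ lam : Cardinal.{u}} (hκ : κ.IsRegular)
    (hW : WPrinciple κ lam) (hlam : κ ≤ lam) : 2 ^< κ ≤ κ :=
  powerlt_le.2 fun _ hc => two_power_le_of_wprinciple hκ hW hc (hc.le.trans hlam)

noncomputable abbrev ordTree (κ : Cardinal.{u}) (hκ : ℵ₀ ≤ κ) : TreeSystem κ where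
  Lev α := Iic α
  proj {_ β} _ x := ⟨min x.1 β, mem_Iic.2 (min_le_right _ _)⟩
  proj_refl _ x := Subtype.ext (min_eq_left x.2)
  proj_comp h1 _ x := Subtype.ext (by simp only [min_assoc, min_eq_right h1])
  small := mk_Iic_toType_lt hκ

section ordTree

variable {κ : Cardinal.{u}} {hκ : ℵ₀ ≤ κ}

noncomputable def ordBranch (γ : κ.ord.ToType) : Branch (ordTree κ hκ) :=
  ⟨fun β => ⟨min γ β, mem_Iic.2 (min_le_right _ _)⟩, fun _ β h => Subtype.ext <| by
    simp only [min_assoc, min_eq_right h]⟩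

theorem ordBranch_apply_of_le {γ β : κ.ord.ToType} (h : γ ≤ β) :
    ((ordBranch (hκ := hκ) γ).1 β : κ.ord.ToType) = γ := by
  exact min_eq_left h

theorem ordBranch_injective : Function.Injective (ordBranch (hκ := hκ)) := by
  intro γ γ' h
  have := congrArg (fun b : Branch (ordTree κ hκ) => (b.1 (max γ γ') : κ.ord.ToType)) h
  simpa only [ordBranch_apply_of_le (le_max_left γ γ'),
    ordBranch_apply_of_le (le_max_right γ γ')] using this

theorem image_ordBranch_of_le {S : Set κ.ord.ToType} {β : κ.ord.ToType} (hS : ∀ γ ∈ S, γ ≤ β) :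
    (fun b : Branch (ordTree κ hκ) => b.1 β) '' (ordBranch '' S) = Subtype.val ⁻¹' S := by
  ext n
  constructor
  · rintro ⟨_, ⟨γ, hγ, rfl⟩, rfl⟩
    rwa [mem_preimage, ordBranch_apply_of_le (hS γ hγ)]
  · intro hn
    exact ⟨ordBranch n.1, mem_image_of_mem _ hn, Subtype.ext (ordBranch_apply_of_le n.2)⟩

end ordTree

theorem wprinciple_of_two_powerlt_le {κ : Cardinal.{u}} (hκ : κ.IsRegular) (h2 : 2 ^< κ ≤ κ) :
    WPrinciple κ κ := by
  have hκ0 := hκ.aleph0_le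
  have := Cardinal.noMaxOrder hκ0
  obtain ⟨j⟩ := (mk_bounded_sets_le hκ0 h2).trans (mk_ord_toType κ).ge
  refine ⟨ordTree κ hκ0, range ordBranch,
    fun β => (fun S : ↥(⋃ α : κ.ord.ToType, 𝒫 Iio α) => Subtype.val ⁻¹' S.1) '' (⇑j ⁻¹' Iio β),
    ?_, fun β => ?_, fun z hzB hz => ?_⟩
  · rw [← lift_id #(range _), mk_range_eq_of_injective ordBranch_injective, lift_id,
      mk_ord_toType]
  · exact mk_image_le.trans_lt
      ((mk_preimage_of_injective _ _ j.injective).trans_lt (mk_Iio_toType_lt β))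
  · obtain ⟨a, ha⟩ := hκ.exists_forall_lt_of_mk_lt
      ((mk_preimage_of_injective _ _ ordBranch_injective).trans_lt hz)
    let S : ⋃ α : κ.ord.ToType, 𝒫 Iio α := ⟨ordBranch ⁻¹' z, mem_iUnion.2 ⟨a, ha⟩⟩
    obtain ⟨β₀, hβ₀⟩ := exists_gt (max a (j S))
    refine ⟨β₀, fun β hβ => ?_⟩
    obtain ⟨haβ, hjβ⟩ := max_lt_iff.1 (hβ₀.trans_le hβ)
    refine ⟨S, hjβ, ?_⟩
    show Subtype.val ⁻¹' (ordBranch ⁻¹' z) = (fun b : Branch (ordTree κ hκ0) => b.1 β) '' z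
    rw [← image_ordBranch_of_le fun γ hγ => ((ha γ hγ).trans haβ).le,
      image_preimage_eq_of_subset hzB]

theorem stmt17_general (κ : Cardinal.{u}) (hκ : κ.IsRegular) :
    WPrinciple κ κ ↔ (2 : Cardinal.{u}) ^< κ = κ :=
  ⟨fun h => (two_powerlt_le_of_wprinciple hκ h le_rfl).antisymm (le_two_powerlt_self κ),
    fun h => wprinciple_of_two_powerlt_le hκ h.le⟩

/-- For regular uncountable `κ`, the principle `W_κ(κ)` is equivalent to
`2^{<κ} = κ`. -/
theorem stmt17 (κ : Cardinal.{u}) (hκ : κ.IsRegular) (huncount : ℵ₀ < κ) :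
    WPrinciple κ κ ↔ (2 : Cardinal.{u}) ^< κ = κ :=
  stmt17_general κ hκ
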